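/- Let G be a well-tempered scoring game in J (gap_0(G)=0 and gap_1(G) ≤ 2) with gap_0(G)=0 and every subgame condition inherited, and suppose G is canonical (no subgame has dominated or reversible options). If G ≈ n for some integer n, then G is literally equal to the integer n. -/

import Mathlib

/-- Well-tempered scoring game trees: an integer (final score) or a position
with lists of Left and Right options. -/
inductive WT : Type where
  | int : ℤ → WT
  | node : List WT → List WT → WT

namespace WT

/-- Left options. -/
def lopts : WT → List WT
  | int _ => []
  | node L _ => L

/-- Right options. -/
def ropts : WT → List WT
  | int _ => []
  | node _ R => R

theorem sizeOf_lt_of_mem_lopts : ∀ {G g : WT}, g ∈ G.lopts → sizeOf g < sizeOf G := by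
  intro G g h
  cases G with
  | int n => simp [lopts] at h
  | node L R =>
    simp only [lopts] at h
    have h1 := List.sizeOf_lt_of_mem h
    have h2 : sizeOf (WT.node L R) = 1 + sizeOf L + sizeOf R := by simp
    omega

theorem sizeOf_lt_of_mem_ropts : ∀ {G g : WT}, g ∈ G.ropts → sizeOf g < sizeOf G := by
  intro G g h
  cases G with
  | int n => simp [ropts] at h
  | node L R =>
    simp only [ropts] at h
    have h1 := List.sizeOf_lt_of_mem h
    have h2 : sizeOf (WT.node L R) = 1 + sizeOf L + sizeOf R := by simp
    omega

/-- Disjunctive sum of two games. -/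
def add (G H : WT) : WT :=
  match G, H with
  | int m, int n => int (m + n)
  | G, H =>
    node ((G.lopts.attach.map fun g => add g.1 H) ++ (H.lopts.attach.map fun h => add G h.1))
         ((G.ropts.attach.map fun g => add g.1 H) ++ (H.ropts.attach.map fun h => add G h.1))
termination_by sizeOf G + sizeOf H
decreasing_by
  all_goals
    first
      | (have := sizeOf_lt_of_mem_lopts g.2; omega)
      | (have := sizeOf_lt_of_mem_lopts h.2; omega)
      | (have := sizeOf_lt_of_mem_ropts g.2; omega)
      | (have := sizeOf_lt_of_mem_ropts h.2; omega)

/-- Negation of a game: swap players and negate scores. -/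
def neg : WT → WT
  | int n => int (-n)
  | node L R =>
    node ((WT.node L R).ropts.attach.map fun g => neg g.1)
         ((WT.node L R).lopts.attach.map fun g => neg g.1)
termination_by G => sizeOf G
decreasing_by
  all_goals
    first
      | exact sizeOf_lt_of_mem_lopts g.2
      | exact sizeOf_lt_of_mem_ropts g.2

def lmax : List ℤ → ℤ
  | [] => 0
  | x :: xs => xs.foldl max x

def lmin : List ℤ → ℤ
  | [] => 0
  | x :: xs => xs.foldl min x

/-- The pair (left outcome, right outcome). -/
def out : WT → ℤ × ℤ
  | int n => (n, n)
  | node L R =>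
    (lmax ((WT.node L R).lopts.attach.map fun g => (out g.1).2),
     lmin ((WT.node L R).ropts.attach.map fun g => (out g.1).1))
termination_by G => sizeOf G
decreasing_by
  all_goals
    first
      | exact sizeOf_lt_of_mem_lopts g.2
      | exact sizeOf_lt_of_mem_ropts g.2

/-- Left outcome L(G): optimal score when Left moves first. -/
def Lout (G : WT) : ℤ := G.out.1

/-- Right outcome R(G): optimal score when Right moves first. -/
def Rout (G : WT) : ℤ := G.out.2

/-- `IsWT G p` : `G` is a well-tempered game of parity `p`
(`false` = even-tempered, `true` = odd-tempered). -/
inductive IsWT : WT → Bool → Prop where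
  | int (n : ℤ) : IsWT (WT.int n) false
  | node {L R : List WT} {p : Bool} (hL : L ≠ []) (hR : R ≠ [])
      (hLp : ∀ g ∈ L, IsWT g p) (hRp : ∀ g ∈ R, IsWT g p) :
      IsWT (WT.node L R) (!p)

/-- `G` is a well-tempered game (of some parity). -/
def Wt (G : WT) : Prop := ∃ p, IsWT G p

/-- Parity, computed structurally (`false` = even-tempered, `true` = odd-tempered;
agrees with `IsWT` on well-tempered games). -/
def par : WT → Bool
  | int _ => false
  | node [] _ => true
  | node (g :: _) _ => !(par g)

/-- Final score under optimal play when Left moves last. -/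
def Lf (G : WT) : ℤ := if G.par then G.Lout else G.Rout

/-- Final score under optimal play when Right moves last. -/
def Rf (G : WT) : ℤ := if G.par then G.Rout else G.Lout

/-- `G ≲ H` : for every well-tempered `X`, `L(G+X) ≤ L(H+X)` and `R(G+X) ≤ R(H+X)`. -/
def Le (G H : WT) : Prop :=
  ∀ X : WT, X.Wt → (G.add X).Lout ≤ (H.add X).Lout ∧ (G.add X).Rout ≤ (H.add X).Rout

/-- `G ≳ H`. -/
def Ge (G H : WT) : Prop := Le H G

/-- `G ≈ H` : equivalence of scoring games. -/
def Equiv (G H : WT) : Prop :=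
  ∀ X : WT, X.Wt → (G.add X).Lout = (H.add X).Lout ∧ (G.add X).Rout = (H.add X).Rout

/-- `G` and `H` are well-tempered with the same parity. -/
def SamePar (G H : WT) : Prop := ∃ p, IsWT G p ∧ IsWT H p

/-- `G` takes values in `S`: every integer subgame lies in `S`. -/
inductive Valued (S : Set ℤ) : WT → Prop where
  | int {n : ℤ} : n ∈ S → Valued S (WT.int n)
  | node {L R : List WT} : (∀ g ∈ L, Valued S g) → (∀ g ∈ R, Valued S g) →
      Valued S (WT.node L R)

/-- `Subgame H G` : `H` is a subgame of `G`. -/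
inductive Subgame : WT → WT → Prop where
  | refl (G : WT) : Subgame G G
  | left {H G' : WT} {L R : List WT} : G' ∈ L → Subgame H G' → Subgame H (WT.node L R)
  | right {H G' : WT} {L R : List WT} : G' ∈ R → Subgame H G' → Subgame H (WT.node L R)

/-- `gap G p` : supremum of `R(H) - L(H)` over subgames `H` of `G` of parity `p`
(as an element of `WithBot ℤ`; the supremum of the empty set is `⊥ = -∞`). -/
noncomputable def gap (G : WT) (p : Bool) : WithBot ℤ :=
  sSup {x : WithBot ℤ | ∃ H : WT, Subgame H G ∧ IsWT H p ∧ x = ((H.Rout - H.Lout : ℤ) : WithBot ℤ)}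

/-- Heating by `t`. -/
def heat (t : ℤ) : WT → WT
  | int n => int n
  | node L R =>
    node ((WT.node L R).lopts.attach.map fun g => (WT.int t).add (heat t g.1))
         ((WT.node L R).ropts.attach.map fun g => (WT.int (-t)).add (heat t g.1))
termination_by G => sizeOf G
decreasing_by
  all_goals
    first
      | exact sizeOf_lt_of_mem_lopts g.2
      | exact sizeOf_lt_of_mem_ropts g.2

end WT

namespace WT

/-- `G` has no dominated and no reversible Left or Right options. -/
def NoBad (G : WT) : Prop :=
  (∀ gl ∈ G.lopts,
      (¬ ∃ glr ∈ gl.ropts, Le glr G) ∧ ¬ ∃ gl' ∈ G.lopts, gl' ≠ gl ∧ Le gl gl') ∧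
  (∀ gr ∈ G.ropts,
      (¬ ∃ grl ∈ gr.lopts, Ge grl G) ∧ ¬ ∃ gr' ∈ G.ropts, gr' ≠ gr ∧ Ge gr gr')

/-- `G` is canonical: no subgame has dominated or reversible options. -/
def Canonical (G : WT) : Prop := ∀ H : WT, Subgame H G → NoBad H

end WT

/-!
Since `gap₀ G = 0`, every even-tempered subgame `K` of `G` has `R K ≤ L K`. Testing `G ≈ n`
against `0` gives `L G = n`, and testing it against the game `{-1 | 1}` shows that `G` is
even-tempered: under the gap condition, adding `{-1 | 1}` to an odd-tempered game raises its Left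
outcome by at least one, while it lowers the Left outcome of `n` by one.

An even-tempered game `K` satisfying the gap condition with `L K ≤ n` satisfies `K ≲ n`; this
is proved by induction on `K` and then on `X`, simultaneously with `R (K + X) ≤ n + L X` for
odd-tempered `K` with `R K ≤ n`. So if `G` is not an integer, take a Left option `G^L`
(odd-tempered) and a Right option `G^{LR}` of it with `L G^{LR} = R G^L ≤ L G = n`. Then
`G^{LR} ≲ n ≈ G`, so `G^L` is reversible, contradicting canonicity.
-/

namespace WT

theorem lmax_eq_max {l : List ℤ} (hl : l ≠ []) : lmax l = l.max hl := by
  cases l with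
  | nil => contradiction
  | cons a t => rfl

theorem lmin_eq_min {l : List ℤ} (hl : l ≠ []) : lmin l = l.min hl := by
  cases l with
  | nil => contradiction
  | cons a t => rfl

theorem le_lmax {l : List ℤ} {x : ℤ} (h : x ∈ l) : x ≤ lmax l := by
  rw [lmax_eq_max (List.ne_nil_of_mem h)]
  exact List.le_max_of_mem h

theorem lmin_le {l : List ℤ} {x : ℤ} (h : x ∈ l) : lmin l ≤ x := by
  rw [lmin_eq_min (List.ne_nil_of_mem h)]
  exact List.min_le_of_mem h

theorem lmax_le {l : List ℤ} {c : ℤ} (hl : l ≠ []) (h : ∀ x ∈ l, x ≤ c) :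
    lmax l ≤ c := by
  rw [lmax_eq_max hl]
  exact (List.max_le_iff hl).2 h

theorem le_lmin {l : List ℤ} {c : ℤ} (hl : l ≠ []) (h : ∀ x ∈ l, c ≤ x) :
    c ≤ lmin l := by
  rw [lmin_eq_min hl]
  exact (List.le_min_iff hl).2 h

theorem lmax_mem {l : List ℤ} (hl : l ≠ []) : lmax l ∈ l := by
  rw [lmax_eq_max hl]
  exact List.max_mem hl

theorem lmin_mem {l : List ℤ} (hl : l ≠ []) : lmin l ∈ l := by
  rw [lmin_eq_min hl]
  exact List.min_mem hl

theorem lmax_map_add (l : List ℤ) (hl : l ≠ []) (k : ℤ) :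
    lmax (l.map (· + k)) = lmax l + k := by
  cases l with
  | nil => contradiction
  | cons a t =>
    simp only [List.map_cons, lmax, List.foldl_map]
    exact List.foldl_hom (· + k) fun x y => max_add_add_right x y k

theorem lmin_map_add (l : List ℤ) (hl : l ≠ []) (k : ℤ) :
    lmin (l.map (· + k)) = lmin l + k := by
  cases l with
  | nil => contradiction
  | cons a t =>
    simp only [List.map_cons, lmin, List.foldl_map]
    exact List.foldl_hom (· + k) fun x y => min_add_add_right x y k

@[elab_as_elim]
theorem ind {motive : WT → Prop} (int : ∀ n, motive (int n))
    (node : ∀ L R, (∀ g ∈ L, motive g) → (∀ g ∈ R, motive g) → motive (node L R)) :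
    ∀ G, motive G
  | .int n => int n
  | .node L R => node L R (fun g _ => ind int node g) (fun g _ => ind int node g)
termination_by G => sizeOf G
decreasing_by
  all_goals
    have := List.sizeOf_lt_of_mem ‹_›
    simp only [WT.node.sizeOf_spec]
    omega

theorem add_int_int (m k : ℤ) : (int m).add (int k) = int (m + k) := by
  simp [add]

theorem lopts_add (G X : WT) :
    (G.add X).lopts = G.lopts.map (·.add X) ++ X.lopts.map G.add := by
  rw [add.eq_def]
  split <;> simp [lopts]

theorem ropts_add (G X : WT) :
    (G.add X).ropts = G.ropts.map (·.add X) ++ X.ropts.map G.add := by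
  rw [add.eq_def]
  split <;> simp [ropts]

theorem int_add_comm (k : ℤ) (G : WT) : (int k).add G = G.add (int k) := by
  induction G using ind with
  | int m => rw [add_int_int, add_int_int, Int.add_comm]
  | node L R ihL ihR =>
    rw [add.eq_def, add.eq_def]
    simp only [lopts, ropts, List.map_nil, List.attach_nil, List.nil_append, List.append_nil]
    exact congrArg₂ node (List.map_congr_left fun g _ => ihL g.1 g.2)
      (List.map_congr_left fun g _ => ihR g.1 g.2)

theorem Lout_int (m : ℤ) : (int m).Lout = m := by simp [Lout, out]

theorem Rout_int (m : ℤ) : (int m).Rout = m := by simp [Rout, out]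

theorem Lout_node (L R : List WT) : (node L R).Lout = lmax (L.map Rout) := by
  simp only [Lout, out, lopts, List.map_subtype, List.unattach_attach]
  rfl

theorem Rout_node (L R : List WT) : (node L R).Rout = lmin (R.map Lout) := by
  simp only [Rout, out, ropts, List.map_subtype, List.unattach_attach]
  rfl

theorem Lout_eq_lmax {G : WT} (hG : G.lopts ≠ []) : G.Lout = lmax (G.lopts.map Rout) := by
  cases G with
  | int m => exact absurd rfl hG
  | node L R => exact Lout_node L R

theorem Rout_eq_lmin {G : WT} (hG : G.ropts ≠ []) : G.Rout = lmin (G.ropts.map Lout) := by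
  cases G with
  | int m => exact absurd rfl hG
  | node L R => exact Rout_node L R

theorem Rout_le_Lout_of_mem_lopts {G g : WT} (hg : g ∈ G.lopts) : g.Rout ≤ G.Lout := by
  rw [Lout_eq_lmax (List.ne_nil_of_mem hg)]
  exact le_lmax (List.mem_map_of_mem hg)

theorem Rout_le_Lout_of_mem_ropts {G g : WT} (hg : g ∈ G.ropts) : G.Rout ≤ g.Lout := by
  rw [Rout_eq_lmin (List.ne_nil_of_mem hg)]
  exact lmin_le (List.mem_map_of_mem hg)

theorem Lout_le {G : WT} {c : ℤ} (hG : G.lopts ≠ []) (h : ∀ g ∈ G.lopts, g.Rout ≤ c) :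
    G.Lout ≤ c := by
  rw [Lout_eq_lmax hG]
  exact lmax_le (by simpa using hG) (by simpa using h)

theorem le_Rout {G : WT} {c : ℤ} (hG : G.ropts ≠ []) (h : ∀ g ∈ G.ropts, c ≤ g.Lout) :
    c ≤ G.Rout := by
  rw [Rout_eq_lmin hG]
  exact le_lmin (by simpa using hG) (by simpa using h)

theorem exists_mem_lopts_Lout_le_Rout {G : WT} (hG : G.lopts ≠ []) :
    ∃ g ∈ G.lopts, G.Lout ≤ g.Rout := by
  obtain ⟨g, hg, hgm⟩ := List.mem_map.1 (lmax_mem (l := G.lopts.map Rout) (by simpa using hG))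
  exact ⟨g, hg, by rw [Lout_eq_lmax hG, hgm]⟩

theorem exists_mem_ropts_Lout_le_Rout {G : WT} (hG : G.ropts ≠ []) :
    ∃ g ∈ G.ropts, g.Lout ≤ G.Rout := by
  obtain ⟨g, hg, hgm⟩ := List.mem_map.1 (lmin_mem (l := G.ropts.map Lout) (by simpa using hG))
  exact ⟨g, hg, by rw [Rout_eq_lmin hG, hgm]⟩

theorem IsWT.of_mem_lopts {G g : WT} {p : Bool} (hG : IsWT G p) (hg : g ∈ G.lopts) :
    IsWT g (!p) := by
  cases hG with
  | int m => simp [lopts] at hg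
  | node _ _ hLp _ => simpa using hLp g hg

theorem IsWT.of_mem_ropts {G g : WT} {p : Bool} (hG : IsWT G p) (hg : g ∈ G.ropts) :
    IsWT g (!p) := by
  cases hG with
  | int m => simp [ropts] at hg
  | node _ _ _ hRp => simpa using hRp g hg

theorem IsWT.lopts_ne_nil_of_node {L R : List WT} {p : Bool} (hG : IsWT (WT.node L R) p) :
    L ≠ [] := by
  cases hG with
  | node hL _ _ _ => exact hL

theorem IsWT.ropts_ne_nil {G : WT} {p : Bool} (hG : IsWT G p) (hp : p = true) :
    G.ropts ≠ [] := by
  cases hG with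
  | int => cases hp
  | node _ hR _ _ => exact hR

theorem outcomes_add_int {G : WT} {p : Bool} (hG : IsWT G p) (k : ℤ) :
    (G.add (int k)).Lout = G.Lout + k ∧ (G.add (int k)).Rout = G.Rout + k := by
  induction hG with
  | int m => simp [add_int_int, Lout_int, Rout_int]
  | @node L R p hL hR _ _ ihL ihR =>
    have hlopts : ((node L R).add (int k)).lopts = L.map (·.add (int k)) := by
      rw [lopts_add]; simp [lopts]
    have hropts : ((node L R).add (int k)).ropts = R.map (·.add (int k)) := by
      rw [ropts_add]; simp [ropts]
    have hLshift : (L.map (·.add (int k))).map Rout = (L.map Rout).map (· + k) := by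
      simp only [List.map_map]
      exact List.map_congr_left fun g hg => (ihL g hg).2
    have hRshift : (R.map (·.add (int k))).map Lout = (R.map Lout).map (· + k) := by
      simp only [List.map_map]
      exact List.map_congr_left fun g hg => (ihR g hg).1
    rw [Lout_eq_lmax (by simpa [hlopts]), Rout_eq_lmin (by simpa [hropts]), hlopts, hropts,
      hLshift, hRshift, lmax_map_add _ (by simpa) k, lmin_map_add _ (by simpa) k, Lout_node,
      Rout_node]
    exact ⟨rfl, rfl⟩

theorem outcomes_int_add {G : WT} {p : Bool} (hG : IsWT G p) (k : ℤ) :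
    ((int k).add G).Lout = k + G.Lout ∧ ((int k).add G).Rout = k + G.Rout := by
  rw [int_add_comm, add_comm k, add_comm k]
  exact outcomes_add_int hG k

theorem Subgame.trans {A B C : WT} (hAB : Subgame A B) (hBC : Subgame B C) : Subgame A C := by
  induction hBC with
  | refl => exact hAB
  | left hm _ ih => exact Subgame.left hm ih
  | right hm _ ih => exact Subgame.right hm ih

theorem Subgame.of_mem_lopts {G g : WT} (hg : g ∈ G.lopts) : Subgame g G := by
  cases G with
  | int m => simp [lopts] at hg
  | node L R => exact Subgame.left hg (Subgame.refl g)

theorem Subgame.of_mem_ropts {G g : WT} (hg : g ∈ G.ropts) : Subgame g G := by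
  cases G with
  | int m => simp [ropts] at hg
  | node L R => exact Subgame.right hg (Subgame.refl g)

theorem finite_setOf_subgame (G : WT) : {H | Subgame H G}.Finite := by
  induction G using ind with
  | int m =>
    refine (Set.finite_singleton (int m)).subset fun H hH => ?_
    cases hH
    rfl
  | node L R ihL ihR =>
    refine (((L.finite_toSet.biUnion ihL).union (R.finite_toSet.biUnion ihR)).insert
      (node L R)).subset fun H hH => ?_
    cases hH with
    | refl => exact Set.mem_insert _ _
    | left hm hs => exact Set.mem_insert_of_mem _ (Or.inl (Set.mem_biUnion hm hs))
    | right hm hs => exact Set.mem_insert_of_mem _ (Or.inr (Set.mem_biUnion hm hs))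

/-- The condition `gap G false ≤ 0`, i.e. `gap₀ G ≤ 0`, without the supremum. -/
def EvenGapNonpos (G : WT) : Prop := ∀ K, Subgame K G → IsWT K false → K.Rout ≤ K.Lout

theorem EvenGapNonpos.mono {G H : WT} (hG : EvenGapNonpos G) (hHG : Subgame H G) :
    EvenGapNonpos H :=
  fun K hKH hK => hG K (hKH.trans hHG) hK

theorem evenGapNonpos_of_gap_le {G : WT} (h : G.gap false ≤ ((0 : ℤ) : WithBot ℤ)) :
    EvenGapNonpos G := by
  intro K hKG hK
  -- `sSup` on `WithBot ℤ` is junk for unbounded sets, so boundedness comes from finiteness.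
  have hbdd : BddAbove {x : WithBot ℤ |
      ∃ H : WT, Subgame H G ∧ IsWT H false ∧ x = ((H.Rout - H.Lout : ℤ) : WithBot ℤ)} :=
    (((finite_setOf_subgame G).image fun H : WT => ((H.Rout - H.Lout : ℤ) : WithBot ℤ)).subset
      (by rintro _ ⟨H, hHG, -, rfl⟩; exact ⟨H, hHG, rfl⟩)).bddAbove
  have := WithBot.coe_le_coe.1 ((le_csSup hbdd ⟨K, hKG, hK, rfl⟩).trans h)
  omega

def tempo : WT := node [int (-1)] [int 1]

theorem isWT_tempo : IsWT tempo true :=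
  IsWT.node (p := false) (by simp) (by simp) (by simpa using IsWT.int (-1))
    (by simpa using IsWT.int 1)

theorem Lout_tempo : tempo.Lout = -1 := by
  simp [tempo, Lout_node, lmax, Rout_int]

theorem outcomes_add_tempo {H : WT} {p : Bool} (hH : IsWT H p) (hgap : EvenGapNonpos H) :
    (p = false → H.Rout + 1 ≤ (H.add tempo).Rout) ∧
      (p = true → H.Lout + 1 ≤ (H.add tempo).Lout) := by
  induction hH with
  | int m =>
    refine ⟨fun _ => le_Rout (by rw [ropts_add]; simp [tempo, ropts]) ?_, nofun⟩
    rw [ropts_add]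
    simp [tempo, ropts, add_int_int, Lout_int, Rout_int]
  | @node L R p hL hR hLp hRp ihL ihR =>
    cases p with
    | false =>
      refine ⟨nofun, fun _ => ?_⟩
      obtain ⟨g, hg, hLg⟩ := exists_mem_lopts_Lout_le_Rout (G := node L R) hL
      have hg_tempo := (ihL g hg (hgap.mono (Subgame.of_mem_lopts hg))).1 rfl
      have := Rout_le_Lout_of_mem_lopts (G := (node L R).add tempo) (g := g.add tempo)
        (by rw [lopts_add]; exact List.mem_append_left _ (List.mem_map_of_mem hg))
      omega
    | true =>
      refine ⟨fun _ => le_Rout (by rw [ropts_add]; simp [ropts, hR]) ?_, nofun⟩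
      have hH : IsWT (node L R) false := IsWT.node hL hR hLp hRp
      simp only [ropts_add, List.mem_append, List.mem_map]
      rintro _ (⟨g, hg, rfl⟩ | ⟨x, hx, rfl⟩)
      · have := (ihR g hg (hgap.mono (Subgame.of_mem_ropts hg))).2 rfl
        have := Rout_le_Lout_of_mem_ropts (G := node L R) hg
        omega
      · -- Right answers in `tempo`; the gap condition `R H ≤ L H` pays for this.
        obtain rfl : x = int 1 := by simpa [tempo, ropts] using hx
        have := (outcomes_add_int hH 1).1
        have := hgap _ (Subgame.refl _) hH
        omega

theorem outcomes_add_le_of_even {H : WT} {n : ℤ} (hH : IsWT H false) (hgap : H.Rout ≤ H.Lout)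
    (hn : H.Lout ≤ n)
    (hlopts : ∀ g ∈ H.lopts, ∀ X : WT, X.Wt → (g.add X).Rout ≤ n + X.Lout)
    {X : WT} {q : Bool} (hX : IsWT X q) :
    (H.add X).Lout ≤ n + X.Lout ∧ (H.add X).Rout ≤ n + X.Rout := by
  induction hX with
  | int k =>
    have := outcomes_add_int hH k
    rw [Lout_int, Rout_int]
    omega
  | @node L R q hL hR hLq hRq ihL ihR =>
    have hX : IsWT (node L R) (!q) := IsWT.node hL hR hLq hRq
    constructor
    · refine Lout_le (by rw [lopts_add]; simp [lopts, hL]) ?_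
      simp only [lopts_add, List.mem_append, List.mem_map]
      rintro _ (⟨g, hg, rfl⟩ | ⟨x, hx, rfl⟩)
      · have := hlopts g hg _ ⟨_, hX⟩
        omega
      · have := (ihL x hx).2
        have := Rout_le_Lout_of_mem_lopts (G := node L R) hx
        omega
    · obtain ⟨x, hx, hxR⟩ := exists_mem_ropts_Lout_le_Rout (G := node L R) hR
      have := (ihR x hx).1
      have := Rout_le_Lout_of_mem_ropts (G := H.add (node L R)) (g := H.add x)
        (by rw [ropts_add]; exact List.mem_append_right _ (List.mem_map_of_mem hx))
      omega

theorem outcomes_add_le_int {H : WT} {p : Bool} (hH : IsWT H p) (hgap : EvenGapNonpos H)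
    (n : ℤ) :
    (p = false → H.Lout ≤ n →
      ∀ X : WT, X.Wt → (H.add X).Lout ≤ n + X.Lout ∧ (H.add X).Rout ≤ n + X.Rout) ∧
    (p = true → H.Rout ≤ n → ∀ X : WT, X.Wt → (H.add X).Rout ≤ n + X.Lout) := by
  induction hH with
  | int m =>
    refine ⟨fun _ hn X ⟨q, hX⟩ => ?_, nofun⟩
    exact outcomes_add_le_of_even (IsWT.int m) (by rw [Lout_int, Rout_int]) hn (by simp [lopts]) hX
  | @node L R p hL hR hLp hRp ihL ihR =>
    cases p with
    | false =>
      refine ⟨nofun, fun _ hn X hX => ?_⟩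
      obtain ⟨g, hg, hgR⟩ := exists_mem_ropts_Lout_le_Rout (G := node L R) hR
      have := (ihR g hg (hgap.mono (Subgame.of_mem_ropts hg))).1 rfl (by omega) X hX
      have := Rout_le_Lout_of_mem_ropts (G := (node L R).add X) (g := g.add X)
        (by rw [ropts_add]; exact List.mem_append_left _ (List.mem_map_of_mem hg))
      omega
    | true =>
      refine ⟨fun _ hn X ⟨q, hX⟩ => ?_, nofun⟩
      have hH : IsWT (node L R) false := IsWT.node hL hR hLp hRp
      refine outcomes_add_le_of_even hH (hgap _ (Subgame.refl _) hH) hn (fun g hg => ?_) hX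
      exact (ihL g hg (hgap.mono (Subgame.of_mem_lopts hg))).2 rfl
        ((Rout_le_Lout_of_mem_lopts hg).trans hn)

theorem le_int_of_Lout_le {H : WT} {n : ℤ} (hH : IsWT H false) (hgap : EvenGapNonpos H)
    (hn : H.Lout ≤ n) : Le H (int n) := by
  rintro X ⟨q, hX⟩
  rw [(outcomes_int_add hX n).1, (outcomes_int_add hX n).2]
  exact (outcomes_add_le_int hH hgap n).1 rfl hn X ⟨q, hX⟩

theorem Le.trans_equiv {A B C : WT} (hAB : Le A B) (hCB : Equiv C B) : Le A C := by
  intro X hX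
  rw [(hCB X hX).1, (hCB X hX).2]
  exact hAB X hX

theorem Lout_eq_of_equiv_int {G : WT} {p : Bool} {n : ℤ} (hG : IsWT G p)
    (he : Equiv G (int n)) : G.Lout = n := by
  have := (he (int 0) ⟨false, IsWT.int 0⟩).1
  rwa [(outcomes_add_int hG 0).1, add_int_int, Lout_int, add_zero, add_zero] at this

theorem parity_eq_false_of_equiv_int {G : WT} {p : Bool} {n : ℤ} (hG : IsWT G p)
    (hgap : EvenGapNonpos G) (he : Equiv G (int n)) : p = false := by
  cases p with
  | false => rfl
  | true =>
    have hG_tempo := (outcomes_add_tempo hG hgap).2 rfl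
    have hn_tempo := (outcomes_int_add isWT_tempo n).1
    have := (he tempo ⟨true, isWT_tempo⟩).1
    have := Lout_eq_of_equiv_int hG he
    have := Lout_tempo
    omega

theorem exists_reversing_of_equiv_int {G gl : WT} {n : ℤ} (hG : IsWT G false)
    (hgap : EvenGapNonpos G) (he : Equiv G (int n)) (hgl : gl ∈ G.lopts) :
    ∃ glr ∈ gl.ropts, Le glr G := by
  have hgl_odd : IsWT gl true := hG.of_mem_lopts hgl
  obtain ⟨glr, hglr, hLglr⟩ := exists_mem_ropts_Lout_le_Rout (hgl_odd.ropts_ne_nil rfl)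
  have := Rout_le_Lout_of_mem_lopts hgl
  have := Lout_eq_of_equiv_int hG he
  have hgap_glr : EvenGapNonpos glr :=
    hgap.mono ((Subgame.of_mem_ropts hglr).trans (Subgame.of_mem_lopts hgl))
  exact ⟨glr, hglr,
    (le_int_of_Lout_le (hgl_odd.of_mem_ropts hglr) hgap_glr (by omega)).trans_equiv he⟩

end WT

theorem canonical_int_general (G : WT) (hG : G.Wt)
    (h0 : G.gap false = ((0 : ℤ) : WithBot ℤ))
    (hc : WT.Canonical G) (n : ℤ) (he : WT.Equiv G (WT.int n)) :
    G = WT.int n := by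
  obtain ⟨p, hp⟩ := hG
  have hgap := WT.evenGapNonpos_of_gap_le h0.le
  obtain rfl := WT.parity_eq_false_of_equiv_int hp hgap he
  cases G with
  | int m => rw [← WT.Lout_eq_of_equiv_int hp he, WT.Lout_int]
  | node L R =>
    obtain ⟨gl, hgl⟩ := List.exists_mem_of_ne_nil L hp.lopts_ne_nil_of_node
    exact absurd (WT.exists_reversing_of_equiv_int hp hgap he hgl)
      ((hc _ (WT.Subgame.refl _)).1 gl hgl).1

/-- a canonical well-tempered game in J (gap₀ = 0, gap₁ ≤ 2) that is
equivalent to an integer n is literally the integer n. -/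
theorem canonical_int (G : WT) (hG : G.Wt)
    (h0 : G.gap false = ((0 : ℤ) : WithBot ℤ)) (h1 : G.gap true ≤ ((2 : ℤ) : WithBot ℤ))
    (hc : WT.Canonical G) (n : ℤ) (he : WT.Equiv G (WT.int n)) :
    G = WT.int n :=
  canonical_int_general G hG h0 hc n he
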